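/- Let N and K be natural numbers with K ≥ 1, let a = x_0 < x_1 < ⋯ < x_K = b be a partition of [a,b], and let u : ℝ → ℝ be smooth (infinitely differentiable). For each m = 0, …, K−1, let p_m be the degree-(2N+1) two-point Hermite interpolant of u on [x_m, x_{m+1}]. Then the piecewise interpolant has H^{N+1} seminorm not exceeding that of u: Σ_{m=0}^{K−1} ∫_{x_m}^{x_{m+1}} (p_m^{(N+1)}(x))² dx ≤ ∫_a^b (u^{(N+1)}(x))² dx. -/

import Mathlib

open intervalIntegral

private theorem polyContDiff (p : Polynomial ℝ) : ContDiff ℝ (⊤ : ℕ∞) (fun y => p.eval y) := by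
  induction p using Polynomial.induction_on' with
  | add p q hp hq => simpa [Polynomial.eval_add] using hp.add hq
  | monomial n c => simpa [Polynomial.eval_monomial] using contDiff_const.mul (contDiff_id.pow n)

private theorem iterDerivPoly (p : Polynomial ℝ) (n : ℕ) (x : ℝ) :
    iteratedDeriv n (fun y => p.eval y) x = (Polynomial.derivative^[n] p).eval x := by
  induction n generalizing p with
  | zero => simp
  | succ n ih =>
    rw [iteratedDeriv_succ', Function.iterate_succ_apply]
    rw [← ih p.derivative]
    congr 1
    funext y
    exact Polynomial.deriv (p := p) (x := y)

private theorem hasDerivAtIter {f : ℝ → ℝ} (hf : ContDiff ℝ (⊤ : ℕ∞) f) (k : ℕ) (x : ℝ) :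
    HasDerivAt (iteratedDeriv k f) (iteratedDeriv (k + 1) f x) x := by
  rw [iteratedDeriv_succ]
  exact ((hf.differentiable_iteratedDeriv k (by exact_mod_cast lt_top_iff_ne_top.2 (by simp))) x).hasDerivAt

private theorem contIter {f : ℝ → ℝ} (hf : ContDiff ℝ (⊤ : ℕ∞) f) (k : ℕ) :
    Continuous (iteratedDeriv k f) :=
  hf.continuous_iteratedDeriv k (by exact_mod_cast le_top)

private theorem iterDerivSub {n : ℕ} {f g : ℝ → ℝ} (hf : ContDiff ℝ (⊤ : ℕ∞) f) (hg : ContDiff ℝ (⊤ : ℕ∞) g)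
    (x : ℝ) : iteratedDeriv n (f - g) x = iteratedDeriv n f x - iteratedDeriv n g x := by
  simp_rw [← iteratedDerivWithin_univ]
  exact iteratedDerivWithin_sub (Set.mem_univ x) uniqueDiffOn_univ
    ((hf.of_le (by exact_mod_cast le_top)).contDiffWithinAt) ((hg.of_le (by exact_mod_cast le_top)).contDiffWithinAt)

/-- Repeated integration by parts kills the cross term. -/
private theorem crossAux (N : ℕ) (a b : ℝ) (e : ℝ → ℝ) (he : ContDiff ℝ (⊤ : ℕ∞) e)
    (hea : ∀ j ≤ N, iteratedDeriv j e a = 0) (heb : ∀ j ≤ N, iteratedDeriv j e b = 0) :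
    ∀ j : ℕ, j ≤ N → ∀ q : Polynomial ℝ, Polynomial.derivative^[j + 1] q = 0 →
      ∫ y in a..b, q.eval y * iteratedDeriv (j + 1) e y = 0 := by
  intro j
  induction j with
  | zero =>
    intro _ q hq
    have hq' : q.derivative = 0 := by simpa using hq
    rw [intervalIntegral.integral_mul_deriv_eq_deriv_mul
      (u := fun y => q.eval y) (u' := fun y => q.derivative.eval y)
      (v := iteratedDeriv 0 e) (v' := iteratedDeriv 1 e)
      (fun y _ => Polynomial.hasDerivAt q y)
      (fun y _ => hasDerivAtIter he 0 y)
      ((polyContDiff q.derivative).continuous.intervalIntegrable a b)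
      ((contIter he 1).intervalIntegrable a b)]
    simp [hea 0 (Nat.zero_le N), heb 0 (Nat.zero_le N), hq']
  | succ j ih =>
    intro hj q hq
    rw [intervalIntegral.integral_mul_deriv_eq_deriv_mul
      (u := fun y => q.eval y) (u' := fun y => q.derivative.eval y)
      (v := iteratedDeriv (j + 1) e) (v' := iteratedDeriv (j + 2) e)
      (fun y _ => Polynomial.hasDerivAt q y)
      (fun y _ => hasDerivAtIter he (j + 1) y)
      ((polyContDiff q.derivative).continuous.intervalIntegrable a b)
      ((contIter he (j + 2)).intervalIntegrable a b)]
    have h1 : iteratedDeriv (j + 1) e b = 0 := heb _ hj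
    have h2 : iteratedDeriv (j + 1) e a = 0 := hea _ hj
    have h3 : ∫ y in a..b, q.derivative.eval y * iteratedDeriv (j + 1) e y = 0 := by
      refine ih (Nat.le_of_succ_le hj) q.derivative ?_
      rw [← Function.iterate_succ_apply]
      exact hq
    rw [h1, h2, h3]
    ring

/-- The cross term vanishes. -/
private theorem crossZero (N : ℕ) (a b : ℝ) (p : Polynomial ℝ)
    (hdeg : p.degree ≤ (2 * N + 1 : ℕ)) (e : ℝ → ℝ) (he : ContDiff ℝ (⊤ : ℕ∞) e)
    (hea : ∀ j ≤ N, iteratedDeriv j e a = 0) (heb : ∀ j ≤ N, iteratedDeriv j e b = 0) :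
    ∫ y in a..b, iteratedDeriv (N + 1) (fun z => p.eval z) y * iteratedDeriv (N + 1) e y = 0 := by
  have hnd : p.natDegree ≤ 2 * N + 1 := Polynomial.natDegree_le_iff_degree_le.2 hdeg
  have key : Polynomial.derivative^[N + 1] (Polynomial.derivative^[N + 1] p) = 0 := by
    rw [← Function.iterate_add_apply]
    exact Polynomial.iterate_derivative_eq_zero (by omega)
  have := crossAux N a b e he hea heb N le_rfl (Polynomial.derivative^[N + 1] p) key
  rw [← this]
  congr 1
  funext y
  rw [iterDerivPoly]

/-- Single-cell stability. -/
private theorem cellLe (N : ℕ) (a b : ℝ) (hab : a ≤ b) (u : ℝ → ℝ) (hu : ContDiff ℝ (⊤ : ℕ∞) u)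
    (p : Polynomial ℝ) (hdeg : p.degree ≤ (2 * N + 1 : ℕ))
    (ha : ∀ j ≤ N, iteratedDeriv j (fun y => p.eval y) a = iteratedDeriv j u a)
    (hb : ∀ j ≤ N, iteratedDeriv j (fun y => p.eval y) b = iteratedDeriv j u b) :
    (∫ y in a..b, (iteratedDeriv (N + 1) (fun z => p.eval z) y) ^ 2) ≤
      ∫ y in a..b, (iteratedDeriv (N + 1) u y) ^ 2 := by
  set P : ℝ → ℝ := fun z => p.eval z with hP
  have hPcd : ContDiff ℝ (⊤ : ℕ∞) P := polyContDiff p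
  set e : ℝ → ℝ := u - P with hedef
  have he : ContDiff ℝ (⊤ : ℕ∞) e := hu.sub hPcd
  have hsub : ∀ (j : ℕ) (y : ℝ), iteratedDeriv j e y = iteratedDeriv j u y - iteratedDeriv j P y :=
    fun j y => iterDerivSub hu hPcd y
  have hea : ∀ j ≤ N, iteratedDeriv j e a = 0 := by
    intro j hj; rw [hsub, ha j hj]; ring
  have heb : ∀ j ≤ N, iteratedDeriv j e b = 0 := by
    intro j hj; rw [hsub, hb j hj]; ring
  have hcross := crossZero N a b p hdeg e he hea heb
  have hiP : IntervalIntegrable (fun y => (iteratedDeriv (N + 1) P y) ^ 2) MeasureTheory.volume a b :=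
    ((contIter hPcd (N + 1)).pow 2).intervalIntegrable a b
  have hiPe : IntervalIntegrable
      (fun y => 2 * (iteratedDeriv (N + 1) P y * iteratedDeriv (N + 1) e y)) MeasureTheory.volume a b :=
    (continuous_const.mul ((contIter hPcd (N + 1)).mul (contIter he (N + 1)))).intervalIntegrable a b
  have hie : IntervalIntegrable (fun y => (iteratedDeriv (N + 1) e y) ^ 2) MeasureTheory.volume a b :=
    ((contIter he (N + 1)).pow 2).intervalIntegrable a b
  have hexp : (∫ y in a..b, (iteratedDeriv (N + 1) u y) ^ 2) =
      (∫ y in a..b, (iteratedDeriv (N + 1) P y) ^ 2) +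
      ((∫ y in a..b, 2 * (iteratedDeriv (N + 1) P y * iteratedDeriv (N + 1) e y)) +
       ∫ y in a..b, (iteratedDeriv (N + 1) e y) ^ 2) := by
    rw [← intervalIntegral.integral_add hiPe hie, ← intervalIntegral.integral_add hiP (hiPe.add hie)]
    congr 1
    funext y
    have : iteratedDeriv (N + 1) u y = iteratedDeriv (N + 1) P y + iteratedDeriv (N + 1) e y := by
      rw [hsub]; ring
    rw [this]; ring
  have h2 : (∫ y in a..b, 2 * (iteratedDeriv (N + 1) P y * iteratedDeriv (N + 1) e y)) = 0 := by
    rw [intervalIntegral.integral_const_mul, hcross, mul_zero]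
  have h3 : 0 ≤ ∫ y in a..b, (iteratedDeriv (N + 1) e y) ^ 2 :=
    intervalIntegral.integral_nonneg hab (fun y _ => sq_nonneg _)
  rw [hexp, h2, zero_add]
  linarith

/-- **Stability of piecewise Hermite interpolation in the broken `H^{N+1}` seminorm.**
Let `a = x 0 < x 1 < ⋯ < x K = b` be a partition of `[a,b]` (`K ≥ 1`), let `u` be
smooth, and for each `m < K` let `p m` be the degree-`2N+1` two-point Hermite
interpolant of `u` on `[x m, x (m+1)]`.  Then
`Σ_{m<K} ∫_{x m}^{x (m+1)} ((p m)⁽ᴺ⁺¹⁾)² ≤ ∫_a^b (u⁽ᴺ⁺¹⁾)²`. -/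
theorem piecewise_hermite_interpolation_seminorm_le
    (N K : ℕ) (hK : 1 ≤ K) (a b : ℝ) (x : ℕ → ℝ)
    (hx0 : x 0 = a) (hxK : x K = b) (hxlt : ∀ m < K, x m < x (m + 1))
    (u : ℝ → ℝ) (hu : ContDiff ℝ (⊤ : ℕ∞) u)
    (p : ℕ → Polynomial ℝ)
    (hpdeg : ∀ m < K, (p m).degree ≤ (2 * N + 1 : ℕ))
    (hinterp : ∀ m < K, ∀ j ≤ N,
      iteratedDeriv j (fun y => (p m).eval y) (x m) = iteratedDeriv j u (x m) ∧
      iteratedDeriv j (fun y => (p m).eval y) (x (m + 1)) = iteratedDeriv j u (x (m + 1))) :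
    (∑ m ∈ Finset.range K,
        ∫ y in (x m)..(x (m + 1)), (iteratedDeriv (N + 1) (fun z => (p m).eval z) y) ^ 2) ≤
      ∫ y in a..b, (iteratedDeriv (N + 1) u y) ^ 2 := by
  have hrhs : (∫ y in a..b, (iteratedDeriv (N + 1) u y) ^ 2) =
      ∑ m ∈ Finset.range K, ∫ y in (x m)..(x (m + 1)), (iteratedDeriv (N + 1) u y) ^ 2 := by
    rw [← hx0, ← hxK]
    exact (intervalIntegral.sum_integral_adjacent_intervals
      (fun k _ => ((contIter hu (N + 1)).pow 2).intervalIntegrable _ _)).symm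
  rw [hrhs]
  apply Finset.sum_le_sum
  intro m hm
  have hmK : m < K := Finset.mem_range.1 hm
  exact cellLe N (x m) (x (m + 1)) (hxlt m hmK).le u hu (p m) (hpdeg m hmK)
    (fun j hj => (hinterp m hmK j hj).1) (fun j hj => (hinterp m hmK j hj).2)
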